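/- Stability of the discrete test function: let I_n have length τ_n, let U be a polynomial of degree ≤ p (p ≥ 2) in time with values in a Hilbert space X, set λ = 1/(4(2p+1)τ_n), and let W = Π^0_{p-1}([1 - λ(t - t_{n-1})] U') be the L² projection onto degree ≤ p-1 polynomials of the weighted derivative. Then ‖U'(t_{n-1}) - W(t_{n-1})‖_X ≤ λ √((2p+1) τ_n) ‖U'‖_{L²(I_n;X)} = (1/2)·((2p+1)τ_n)^{-1/2}‖U'‖_{L²(I_n;X)}. -/

import Mathlib

/-!
The residual `D = (1 - λ (t - a)) U' - W` is a polynomial of degree `≤ p` that is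
`L²(a, b)`-orthogonal to every polynomial of degree `< p`, so it is a multiple of the Legendre
polynomial `L_p` of `[a, b]`. Comparing top coefficients, the multiple is `-λ u / lc(L_p)`, where
`u` is the top coefficient of `U'`; evaluating at `a` gives `D(a)` as an explicit multiple of `u`.
Conversely, pairing `U'` with `L_{p-1}` and using Cauchy–Schwarz bounds `‖u‖` by `‖U'‖_{L²}`.
With `L_n` given by Rodrigues' formula, leading coefficients, endpoint values and `‖L_n‖²` all
follow by integration by parts, and the estimate reduces to
`(2p - 1) · C(2p-2, p-1)² ≤ (2p + 1) · C(2p, p)²`.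
-/

open MeasureTheory

/-- `f : ℝ → X` is a polynomial of degree at most `p` with values in `X`. -/
def IsPolyDeg {X : Type*} [AddCommMonoid X] [Module ℝ X] (p : ℕ) (f : ℝ → X) : Prop :=
  ∃ c : ℕ → X, ∀ t : ℝ, f t = ∑ k ∈ Finset.range (p + 1), t ^ k • c k

open Polynomial
open Nat (centralBinom)
open scoped Nat

theorem Polynomial.iterate_derivative_eq_C_of_natDegree_le {R : Type*} [Semiring R] {g : R[X]}
    {n : ℕ} (hg : g.natDegree ≤ n) : derivative^[n] g = C (n ! * g.coeff n) := by
  have hdeg : (hasseDeriv n g).natDegree = 0 :=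
    Nat.eq_zero_of_le_zero ((natDegree_hasseDeriv_le g n).trans (by omega))
  rw [← factorial_smul_hasseDeriv, LinearMap.smul_apply, eq_C_of_natDegree_eq_zero hdeg,
    hasseDeriv_coeff, zero_add, Nat.choose_self, Nat.cast_one, one_mul, smul_C, nsmul_eq_mul]

theorem Polynomial.natDegree_X_sub_C_mul_X_sub_C_pow {R : Type*} [CommRing R] [IsDomain R]
    (a b : R) (n : ℕ) : (((X - C a) * (X - C b)) ^ n).natDegree = 2 * n := by
  rw [natDegree_pow, (monic_X_sub_C a).natDegree_mul (monic_X_sub_C b), natDegree_X_sub_C,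
    natDegree_X_sub_C, mul_comm]

theorem intervalIntegral.sq_integral_mul_le {a b : ℝ} (hab : a ≤ b) {f g : ℝ → ℝ}
    (hf : Continuous f) (hg : Continuous g) :
    (∫ t in a..b, f t * g t) ^ 2 ≤ (∫ t in a..b, f t ^ 2) * ∫ t in a..b, g t ^ 2 := by
  have hquad (s : ℝ) : 0 ≤ (∫ t in a..b, g t ^ 2) * (s * s) + 2 * (∫ t in a..b, f t * g t) * s +
      ∫ t in a..b, f t ^ 2 := calc
    0 ≤ ∫ t in a..b, (f t + s * g t) ^ 2 := integral_nonneg hab fun t _ => sq_nonneg _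
    _ = ∫ t in a..b, ((s * s) * g t ^ 2 + (2 * s) * (f t * g t) + f t ^ 2) :=
        integral_congr fun t _ => by ring
    _ = _ := by
        rw [integral_add, integral_add, integral_const_mul, integral_const_mul]
        · ring
        all_goals exact Continuous.intervalIntegrable (by fun_prop) _ _
  have := discrim_le_zero hquad
  rw [discrim] at this
  linarith

theorem Nat.two_mul_add_one_mul_centralBinom_sq_le (n : ℕ) :
    (2 * n + 1) * centralBinom n ^ 2 ≤ (2 * n + 3) * centralBinom (n + 1) ^ 2 := by
  refine Nat.le_of_mul_le_mul_left ?_ (show 0 < (n + 1) ^ 2 by positivity)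
  calc (n + 1) ^ 2 * ((2 * n + 1) * centralBinom n ^ 2)
      ≤ 4 * (2 * n + 3) * (2 * n + 1) * ((2 * n + 1) * centralBinom n ^ 2) := by
        gcongr; nlinarith
    _ = (2 * n + 3) * ((n + 1) * centralBinom (n + 1)) ^ 2 := by
        rw [succ_mul_centralBinom_succ]; ring
    _ = (n + 1) ^ 2 * ((2 * n + 3) * centralBinom (n + 1) ^ 2) := by ring

namespace Polynomial

variable {a b : ℝ}

theorem integral_eval_mul_iterate_derivative (f g : ℝ[X]) (k : ℕ)
    (ha : ∀ i < k, (derivative^[i] f * derivative^[k - 1 - i] g).eval a = 0)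
    (hb : ∀ i < k, (derivative^[i] f * derivative^[k - 1 - i] g).eval b = 0) :
    ∫ t in a..b, f.eval t * (derivative^[k] g).eval t =
      (-1) ^ k * ∫ t in a..b, (derivative^[k] f).eval t * g.eval t := by
  induction k generalizing f with
  | zero => simp
  | succ k ih =>
    have hshift (i : ℕ) (hi : i < k) : k + 1 - 1 - (i + 1) = k - 1 - i := by omega
    have hf' := ih (derivative f)
      (fun i hi => by
        simpa only [Function.iterate_succ_apply, hshift i hi] using ha (i + 1) (by omega))
      (fun i hi => by
        simpa only [Function.iterate_succ_apply, hshift i hi] using hb (i + 1) (by omega))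
    have hparts := intervalIntegral.integral_mul_deriv_eq_deriv_mul (a := a) (b := b)
      (fun t _ => f.hasDerivAt t) (fun t _ => (derivative^[k] g).hasDerivAt t)
      (f.derivative.continuous.intervalIntegrable a b)
      ((derivative^[k] g).derivative.continuous.intervalIntegrable a b)
    have ha0 := ha 0 k.succ_pos
    have hb0 := hb 0 k.succ_pos
    simp only [eval_mul, Function.iterate_zero_apply, Nat.add_sub_cancel, Nat.sub_zero] at ha0 hb0
    rw [Function.iterate_succ_apply', hparts, ha0, hb0, hf', ← Function.iterate_succ_apply]
    ring

noncomputable def intervalBump (a b : ℝ) (n : ℕ) : ℝ[X] := ((X - C a) * (C b - X)) ^ n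

/-- Rodrigues' formula. Since `hasseDeriv n = derivative^[n] / n!`, this is the Legendre
polynomial of `[a, b]` normalised by its value `(b - a) ^ n` at `a`. -/
noncomputable def intervalLegendre (a b : ℝ) (n : ℕ) : ℝ[X] := hasseDeriv n (intervalBump a b n)

theorem intervalBump_eval (n : ℕ) (t : ℝ) :
    (intervalBump a b n).eval t = (t - a) ^ n * (b - t) ^ n := by
  simp [intervalBump, mul_pow]

theorem intervalBump_eq (n : ℕ) :
    intervalBump a b n = C ((-1) ^ n) * ((X - C a) * (X - C b)) ^ n := by
  rw [intervalBump, C_pow, ← mul_pow]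
  congr 1
  simp only [map_neg, map_one]
  ring

theorem iterate_derivative_intervalBump_eval_left {n i : ℕ} (hi : i < n) :
    (derivative^[i] (intervalBump a b n)).eval a = 0 := by
  obtain ⟨r, hr⟩ := pow_sub_dvd_iterate_derivative_of_pow_dvd i
    (show (X - C a) ^ n ∣ intervalBump a b n by rw [intervalBump, mul_pow]; exact dvd_mul_right _ _)
  simp [hr, zero_pow (Nat.sub_ne_zero_of_lt hi)]

theorem iterate_derivative_intervalBump_eval_right {n i : ℕ} (hi : i < n) :
    (derivative^[i] (intervalBump a b n)).eval b = 0 := by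
  obtain ⟨r, hr⟩ := pow_sub_dvd_iterate_derivative_of_pow_dvd i
    (show (C b - X) ^ n ∣ intervalBump a b n by rw [intervalBump, mul_pow]; exact dvd_mul_left _ _)
  simp [hr, zero_pow (Nat.sub_ne_zero_of_lt hi)]

/-- The Beta integral `B(n + 1, n + 1)`, obtained by moving `n` derivatives from
`(X - a) ^ (2 * n)` onto `(X - b) ^ n`. -/
theorem integral_intervalBump (n : ℕ) :
    (2 * n + 1) * centralBinom n * ∫ t in a..b, (intervalBump a b n).eval t =
      (b - a) ^ (2 * n + 1) := by
  have hparts := integral_eval_mul_iterate_derivative (a := a) (b := b)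
    ((X - C b) ^ n) ((X - C a) ^ (2 * n)) n
    (fun i _ => by
      simp [iterate_derivative_X_sub_pow, zero_pow (show 2 * n - (n - 1 - i) ≠ 0 by omega)])
    (fun i _ => by simp [iterate_derivative_X_sub_pow, zero_pow (show n - i ≠ 0 by omega)])
  simp only [iterate_derivative_X_sub_pow, eval_mul, eval_pow, eval_sub, eval_X, eval_C,
    eval_natCast, nsmul_eq_mul, Nat.sub_eq_of_eq_add (two_mul n), Nat.sub_self, pow_zero, mul_one,
    Nat.descFactorial_self, Nat.descFactorial_eq_factorial_mul_choose] at hparts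
  simp only [mul_left_comm _ ((n ! * (2 * n).choose n : ℕ) : ℝ),
    intervalIntegral.integral_const_mul] at hparts
  have hpow : ∫ t in a..b, (t - a) ^ (2 * n) = (b - a) ^ (2 * n + 1) / (2 * n + 1) := by
    simp [intervalIntegral.integral_comp_sub_right (fun t => t ^ (2 * n))]
  have hbump : ∫ t in a..b, (intervalBump a b n).eval t =
      (-1) ^ n * ∫ t in a..b, (t - b) ^ n * (t - a) ^ n := by
    rw [← intervalIntegral.integral_const_mul]
    congr 1 with t
    rw [intervalBump_eval, ← neg_sub t b, neg_pow]
    ring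
  have hsign : ((-1 : ℝ) ^ n) ^ 2 = 1 := by rw [← pow_mul, mul_comm, pow_mul, neg_one_sq, one_pow]
  rw [hpow] at hparts
  push_cast at hparts
  field_simp at hparts
  rw [hbump, centralBinom]
  linear_combination (-1) ^ n * hparts + (b - a) ^ (2 * n + 1) * hsign

theorem natDegree_intervalLegendre_le (n : ℕ) : (intervalLegendre a b n).natDegree ≤ n := by
  have : (intervalBump a b n).natDegree ≤ 2 * n := by
    rw [intervalBump_eq, ← natDegree_X_sub_C_mul_X_sub_C_pow a b n]
    exact natDegree_C_mul_le _ _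
  exact (natDegree_hasseDeriv_le _ n).trans (by omega)

theorem coeff_intervalLegendre (n : ℕ) :
    (intervalLegendre a b n).coeff n = (-1) ^ n * centralBinom n := by
  have htop : (((X - C a) * (X - C b)) ^ n).coeff (2 * n) = 1 :=
    natDegree_X_sub_C_mul_X_sub_C_pow a b n ▸
      (((monic_X_sub_C a).mul (monic_X_sub_C b)).pow n).coeff_natDegree
  rw [intervalLegendre, hasseDeriv_coeff, intervalBump_eq, coeff_C_mul, ← two_mul, htop,
    centralBinom]
  ring

theorem intervalLegendre_eval_left (n : ℕ) :
    (intervalLegendre a b n).eval a = (b - a) ^ n := by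
  have htaylor : taylor a (intervalBump a b n) = X ^ n * (C (b - a) - X) ^ n := by
    simp only [intervalBump, taylor_apply, pow_comp, mul_comp, sub_comp, X_comp, C_comp, C_sub,
      mul_pow]
    ring
  rw [intervalLegendre, ← taylor_coeff, htaylor, coeff_X_pow_mul', if_pos le_rfl, Nat.sub_self,
    coeff_zero_eq_eval_zero]
  simp

theorem integral_eval_mul_intervalLegendre {g : ℝ[X]} {n : ℕ} (hg : g.natDegree ≤ n) :
    ∫ t in a..b, g.eval t * (intervalLegendre a b n).eval t =
      (-1) ^ n * g.coeff n * ∫ t in a..b, (intervalBump a b n).eval t := by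
  have hrod : (n ! : ℝ) • intervalLegendre a b n = derivative^[n] (intervalBump a b n) := by
    rw [← factorial_smul_hasseDeriv, intervalLegendre, LinearMap.smul_apply,
      Nat.cast_smul_eq_nsmul]
  have hparts := integral_eval_mul_iterate_derivative (a := a) (b := b) g (intervalBump a b n) n
    (fun i _ => by simp [iterate_derivative_intervalBump_eval_left (show n - 1 - i < n by omega)])
    (fun i _ => by simp [iterate_derivative_intervalBump_eval_right (show n - 1 - i < n by omega)])
  rw [← hrod, iterate_derivative_eq_C_of_natDegree_le hg] at hparts
  simp only [eval_smul, eval_C, smul_eq_mul, mul_left_comm _ (n ! : ℝ),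
    intervalIntegral.integral_const_mul] at hparts
  refine mul_left_cancel₀ (Nat.cast_ne_zero.2 n.factorial_ne_zero) (hparts.trans ?_)
  ring

theorem eq_zero_of_integral_eval_sq_eq_zero (hab : a < b) {E : ℝ[X]}
    (h : ∫ t in a..b, E.eval t ^ 2 = 0) : E = 0 := by
  by_contra hE
  obtain ⟨c, hc, hroot⟩ := (Set.Icc_infinite hab).exists_notMem_finset E.roots.toFinset
  rw [Multiset.mem_toFinset, mem_roots hE, IsRoot.def] at hroot
  exact h.not_gt <| intervalIntegral.integral_pos hab (E.continuous.pow 2).continuousOn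
    (fun t _ => sq_nonneg _) ⟨c, hc, sq_pos_of_ne_zero hroot⟩

theorem centralBinom_mul_eval_left_of_orthogonal (hab : a < b) {P : ℝ[X]} {n : ℕ}
    (hP : P.natDegree ≤ n)
    (horth : ∀ Q : ℝ[X], Q.degree < n → ∫ t in a..b, Q.eval t * P.eval t = 0) :
    (-1) ^ n * centralBinom n * P.eval a = P.coeff n * (b - a) ^ n := by
  set L := intervalLegendre a b n
  -- `E` has degree `< n`, so it is orthogonal to `P` and to `L`, hence to itself.
  set E := C (L.coeff n) * P - C (P.coeff n) * L with hE
  have hEdeg : E.natDegree ≤ n :=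
    (natDegree_sub_le _ _).trans (max_le ((natDegree_C_mul_le _ _).trans hP)
      ((natDegree_C_mul_le _ _).trans (natDegree_intervalLegendre_le n)))
  have hEn : E.coeff n = 0 := by simp [hE, mul_comm]
  have hEL : ∫ t in a..b, E.eval t * L.eval t = 0 := by
    simp [L, integral_eval_mul_intervalLegendre hEdeg, hEn]
  have hEP : ∫ t in a..b, E.eval t * P.eval t = 0 := by
    refine horth E ((degree_lt_iff_coeff_zero E n).2 fun m hm => ?_)
    rcases hm.lt_or_eq with hm | rfl
    · exact coeff_eq_zero_of_natDegree_lt (hEdeg.trans_lt hm)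
    · exact hEn
  have hEE : ∫ t in a..b, E.eval t ^ 2 = 0 := calc
    _ = ∫ t in a..b, (L.coeff n * (E.eval t * P.eval t) - P.coeff n * (E.eval t * L.eval t)) :=
        intervalIntegral.integral_congr fun t _ => by
          simp only [hE, eval_sub, eval_mul, eval_C]; ring
    _ = 0 := by
        rw [intervalIntegral.integral_sub, intervalIntegral.integral_const_mul,
          intervalIntegral.integral_const_mul, hEP, hEL, mul_zero, mul_zero, sub_zero]
        all_goals exact Continuous.intervalIntegrable (by fun_prop) _ _
  have hE0 := congrArg (eval a) (eq_zero_of_integral_eval_sq_eq_zero hab hEE)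
  simpa only [hE, eval_sub, eval_mul, eval_C, eval_zero, sub_eq_zero, L,
    intervalLegendre_eval_left, coeff_intervalLegendre] using hE0

theorem coeff_sq_mul_pow_le_integral_eval_sq (hab : a < b) {g : ℝ[X]} {n : ℕ}
    (hg : g.natDegree ≤ n) :
    g.coeff n ^ 2 * (b - a) ^ (2 * n + 1) ≤
      (2 * n + 1) * centralBinom n ^ 2 * ∫ t in a..b, g.eval t ^ 2 := by
  have hsign : ((-1 : ℝ) ^ n) ^ 2 = 1 := by rw [← pow_mul, mul_comm, pow_mul, neg_one_sq, one_pow]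
  have hLL : ∫ t in a..b, (intervalLegendre a b n).eval t ^ 2 =
      centralBinom n * ∫ t in a..b, (intervalBump a b n).eval t := by
    simp only [sq, integral_eval_mul_intervalLegendre (natDegree_intervalLegendre_le n),
      coeff_intervalLegendre]
    linear_combination (centralBinom n * ∫ t in a..b, (intervalBump a b n).eval t) * hsign
  have hCS := intervalIntegral.sq_integral_mul_le hab.le g.continuous
    (intervalLegendre a b n).continuous
  rw [integral_eval_mul_intervalLegendre hg, hLL, mul_pow, mul_pow, hsign, one_mul] at hCS
  have hM := integral_intervalBump (a := a) (b := b) n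
  set M := ∫ t in a..b, (intervalBump a b n).eval t
  have hMpos : 0 < M := by
    have : 0 < (2 * n + 1) * (centralBinom n : ℝ) * M := hM ▸ pow_pos (sub_pos.2 hab) _
    exact pos_of_mul_pos_right this (by positivity)
  have hkey : g.coeff n ^ 2 * M ≤ centralBinom n * ∫ t in a..b, g.eval t ^ 2 :=
    le_of_mul_le_mul_right (by linear_combination hCS) hMpos
  calc g.coeff n ^ 2 * (b - a) ^ (2 * n + 1)
      = (2 * n + 1) * centralBinom n * (g.coeff n ^ 2 * M) := by rw [← hM]; ring
    _ ≤ (2 * n + 1) * centralBinom n * (centralBinom n * ∫ t in a..b, g.eval t ^ 2) :=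
        mul_le_mul_of_nonneg_left hkey (by positivity)
    _ = _ := by ring

end Polynomial

section InnerProductSpace

open Finset

variable {E : Type*} [NormedAddCommGroup E] [InnerProductSpace ℝ E]

noncomputable def innerPoly (n : ℕ) (c : ℕ → E) (x : E) : ℝ[X] :=
  ∑ k ∈ range (n + 1), monomial k (inner ℝ (c k) x)

variable {n : ℕ} {c : ℕ → E}

theorem innerPoly_eval (x : E) (t : ℝ) :
    (innerPoly n c x).eval t = inner ℝ (∑ k ∈ range (n + 1), t ^ k • c k) x := by
  simp [innerPoly, eval_finsetSum, sum_inner, real_inner_smul_left, mul_comm]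

theorem natDegree_innerPoly_le (x : E) : (innerPoly n c x).natDegree ≤ n :=
  natDegree_sum_le_of_forall_le _ _ fun _ hk =>
    (natDegree_monomial_le _).trans (Nat.lt_succ_iff.1 (mem_range.1 hk))

theorem coeff_innerPoly_of_lt {k : ℕ} (hk : n < k) (x : E) : (innerPoly n c x).coeff k = 0 :=
  coeff_eq_zero_of_natDegree_lt ((natDegree_innerPoly_le x).trans_lt hk)

theorem coeff_innerPoly_self (x : E) : (innerPoly n c x).coeff n = inner ℝ (c n) x := by
  simp [innerPoly, coeff_monomial]

theorem IsPolyDeg.of_hasDerivAt {U U' : ℝ → E} (hU : IsPolyDeg (n + 1) U)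
    (hU' : ∀ t, HasDerivAt U (U' t) t) : IsPolyDeg n U' := by
  obtain ⟨c, hc⟩ := hU
  refine ⟨fun k => ((k : ℝ) + 1) • c (k + 1), fun t => ?_⟩
  have hderiv : HasDerivAt U (∑ k ∈ range (n + 2), ((k : ℝ) * t ^ (k - 1)) • c k) t := by
    rw [show U = fun s => ∑ k ∈ range (n + 2), s ^ k • c k from funext hc]
    exact HasDerivAt.fun_sum fun k _ => (hasDerivAt_pow k t).smul_const (c k)
  rw [(hU' t).unique hderiv, sum_range_succ']
  simp [smul_smul, mul_comm]

theorem isPolyDeg_eval_smul {Q : ℝ[X]} (hQ : Q.natDegree ≤ n) (x : E) :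
    IsPolyDeg n fun t => Q.eval t • x :=
  ⟨fun k => Q.coeff k • x, fun t => by
    dsimp only
    rw [eval_eq_sum_range' (Nat.lt_succ_of_le hQ), sum_smul]
    simp [smul_smul, mul_comm]⟩

theorem norm_sq_mul_pow_le_integral_norm_sq {a b : ℝ} (hab : a < b) {V : ℝ → E}
    (hV : ∀ t, V t = ∑ k ∈ range (n + 1), t ^ k • c k) :
    ‖c n‖ ^ 2 * (b - a) ^ (2 * n + 1) ≤
      (2 * n + 1) * centralBinom n ^ 2 * ∫ t in a..b, ‖V t‖ ^ 2 := by
  have hVcont : Continuous V := by rw [funext hV]; fun_prop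
  have hg := coeff_sq_mul_pow_le_integral_eval_sq hab
    (natDegree_innerPoly_le (n := n) (c := c) (c n))
  rw [coeff_innerPoly_self, real_inner_self_eq_norm_sq] at hg
  have hint : ∫ t in a..b, (innerPoly n c (c n)).eval t ^ 2 ≤
      ‖c n‖ ^ 2 * ∫ t in a..b, ‖V t‖ ^ 2 := by
    rw [← intervalIntegral.integral_const_mul]
    refine intervalIntegral.integral_mono_on hab.le
      (Continuous.intervalIntegrable (by fun_prop) _ _)
      (Continuous.intervalIntegrable (by fun_prop) _ _) fun t _ => ?_
    rw [innerPoly_eval, ← hV, ← sq_abs, ← mul_pow, mul_comm]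
    gcongr
    exact abs_real_inner_le_norm _ _
  rcases (sq_nonneg ‖c n‖).eq_or_lt with h0 | hpos
  · rw [← h0, zero_mul]
    exact mul_nonneg (by positivity)
      (intervalIntegral.integral_nonneg hab.le fun t _ => by positivity)
  refine le_of_mul_le_mul_left ?_ hpos
  calc ‖c n‖ ^ 2 * (‖c n‖ ^ 2 * (b - a) ^ (2 * n + 1))
      = (‖c n‖ ^ 2) ^ 2 * (b - a) ^ (2 * n + 1) := by ring
    _ ≤ (2 * n + 1) * centralBinom n ^ 2 * (‖c n‖ ^ 2 * ∫ t in a..b, ‖V t‖ ^ 2) :=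
        hg.trans (mul_le_mul_of_nonneg_left hint (by positivity))
    _ = _ := by ring

theorem centralBinom_smul_sub_eq_of_weighted_orthogonal {a b lam : ℝ} (hab : a < b)
    {U' W : ℝ → E} (hU' : ∀ t, U' t = ∑ k ∈ range (n + 1), t ^ k • c k) (hW : IsPolyDeg n W)
    (hproj : ∀ q : ℝ → E, IsPolyDeg n q →
      ∫ t in a..b, inner ℝ ((1 - lam * (t - a)) • U' t - W t) (q t) = 0) :
    ((-1) ^ (n + 1) * centralBinom (n + 1) : ℝ) • (U' a - W a) =
      (-(lam * (b - a) ^ (n + 1))) • c n := by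
  obtain ⟨w, hw⟩ := hW
  refine ext_inner_right ℝ fun x => ?_
  -- `P` is `t ↦ ⟪(1 - lam (t - a)) U' t - W t, x⟫`; its top coefficient comes from `-lam t U' t`.
  set P := (1 - C lam * (X - C a)) * innerPoly n c x - innerPoly n w x with hP
  have hPeval (t : ℝ) : P.eval t = inner ℝ ((1 - lam * (t - a)) • U' t - W t) x := by
    simp [hP, innerPoly_eval, hU', hw, inner_sub_left, real_inner_smul_left]
  have hPdeg : P.natDegree ≤ n + 1 := by
    have hlin : (1 - C lam * (X - C a)).natDegree ≤ 1 := by compute_degree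
    have := natDegree_innerPoly_le (n := n) (c := c) x
    exact (natDegree_sub_le _ _).trans (max_le (natDegree_mul_le.trans (by omega))
      ((natDegree_innerPoly_le x).trans n.le_succ))
  have hPtop : P.coeff (n + 1) = -(lam * inner ℝ (c n) x) := by
    have hP' : P = innerPoly n c x - C lam * (X * innerPoly n c x) +
        C (lam * a) * innerPoly n c x - innerPoly n w x := by
      rw [hP, C_mul]; ring
    rw [hP', coeff_sub, coeff_add, coeff_sub, coeff_C_mul, coeff_C_mul, coeff_X_mul,
      coeff_innerPoly_self, coeff_innerPoly_of_lt n.lt_succ_self,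
      coeff_innerPoly_of_lt n.lt_succ_self]
    ring
  have horth (Q : ℝ[X]) (hQ : Q.degree < ↑(n + 1)) : ∫ t in a..b, Q.eval t * P.eval t = 0 := by
    have hQn : Q.natDegree ≤ n := natDegree_le_iff_coeff_eq_zero.2 fun N hN =>
      (degree_lt_iff_coeff_zero Q (n + 1)).1 hQ N hN
    rw [← hproj _ (isPolyDeg_eval_smul hQn x)]
    congr 1 with t
    rw [hPeval, real_inner_smul_right, mul_comm]
  have key := centralBinom_mul_eval_left_of_orthogonal hab hPdeg horth
  rw [hPeval, hPtop, sub_self, mul_zero, sub_zero, one_smul] at key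
  rw [real_inner_smul_left, real_inner_smul_left]
  linear_combination key

end InnerProductSpace

/-- Walkington's endpoint estimate for the discrete test function: with
`λ = 1/(4(2p+1)τₙ)` and `W = Π⁰_{p-1}([1 - λ(t - t_{n-1})] U')`,
`‖U'(t_{n-1}) - W(t_{n-1})‖ ≤ λ √((2p+1)τₙ) ‖U'‖_{L²(Iₙ;X)}`. -/
theorem discrete_test_function_endpoint_estimate
    {X : Type} [NormedAddCommGroup X] [InnerProductSpace ℝ X]
    (p : ℕ) (hp : 2 ≤ p) (a b : ℝ) (hab : a < b)
    (U U' W : ℝ → X)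
    (hU : IsPolyDeg p U) (hU' : ∀ t, HasDerivAt U (U' t) t)
    (hW : IsPolyDeg (p - 1) W)
    (lam : ℝ) (hlam : lam = 1 / (4 * (2 * (p:ℝ) + 1) * (b - a)))
    (hproj : ∀ q : ℝ → X, IsPolyDeg (p - 1) q →
      ∫ t in Set.Ioc a b, (inner ℝ ((1 - lam * (t - a)) • U' t - W t) (q t) : ℝ) = 0) :
    ‖U' a - W a‖ ≤ lam * Real.sqrt ((2 * (p:ℝ) + 1) * (b - a))
        * Real.sqrt (∫ t in Set.Ioc a b, ‖U' t‖ ^ 2) := by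
  obtain ⟨n, rfl⟩ : ∃ n, p = n + 1 := ⟨p - 1, by omega⟩
  rw [Nat.add_sub_cancel] at hW hproj
  obtain ⟨u, hu⟩ := IsPolyDeg.of_hasDerivAt hU hU'
  simp only [← intervalIntegral.integral_of_le hab.le] at hproj ⊢
  have hτ : 0 < b - a := sub_pos.2 hab
  have hlam_pos : 0 < lam := hlam ▸ by positivity
  have hres := congrArg norm (centralBinom_smul_sub_eq_of_weighted_orthogonal hab hu hW hproj)
  rw [norm_smul, norm_smul, norm_mul, norm_pow, norm_neg, norm_one, one_pow, one_mul,
    Real.norm_natCast, norm_neg, Real.norm_of_nonneg (by positivity)] at hres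
  have hbinom : ((2 * n + 1) * centralBinom n ^ 2 : ℝ) ≤
      (2 * n + 3) * centralBinom (n + 1) ^ 2 := by
    exact_mod_cast Nat.two_mul_add_one_mul_centralBinom_sq_le n
  have hI : 0 ≤ ∫ t in a..b, ‖U' t‖ ^ 2 :=
    intervalIntegral.integral_nonneg hab.le fun t _ => by positivity
  rw [← Real.sqrt_sq hlam_pos.le, ← Real.sqrt_mul (by positivity), ← Real.sqrt_mul (by positivity)]
  refine Real.le_sqrt_of_sq_le (le_of_mul_le_mul_right ?_
    (pow_pos (Nat.cast_pos.2 (Nat.centralBinom_pos (n + 1))) 2))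
  calc ‖U' a - W a‖ ^ 2 * centralBinom (n + 1) ^ 2
      = lam ^ 2 * (b - a) * (‖u n‖ ^ 2 * (b - a) ^ (2 * n + 1)) := by
        rw [← mul_pow, mul_comm, hres]; ring
    _ ≤ lam ^ 2 * (b - a) * ((2 * n + 1) * centralBinom n ^ 2 * ∫ t in a..b, ‖U' t‖ ^ 2) :=
        mul_le_mul_of_nonneg_left (norm_sq_mul_pow_le_integral_norm_sq hab hu) (by positivity)
    _ ≤ lam ^ 2 * (b - a) *
          ((2 * n + 3) * centralBinom (n + 1) ^ 2 * ∫ t in a..b, ‖U' t‖ ^ 2) := by gcongr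
    _ = _ := by push_cast; ring
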